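/- (Theorem 3.2) Assume the CRK setup. Let M, K and L be skew-symmetric real d×d matrices, let S : ℝ^d × ℝ × ℝ → ℝ be continuously differentiable in its first argument (gradient ∇_z S), let D_x be a skew-symmetric real N×N matrix and D_y a skew-symmetric real M̃×M̃ matrix, let x_0, …, x_{N−1}, y_0, …, y_{M̃−1} ∈ ℝ and Δt > 0. For j = 0, …, N−1 and l = 0, …, M̃−1 let δ_t z_{jl} : [0,1] → ℝ^d be continuous and z_{jl}⁰ ∈ ℝ^d, define z_{jl}(τ) = z_{jl}⁰ + Δt ∫₀¹ A_{τ,σ} δ_t z_{jl}(σ) dσ, z_{jl}¹ = z_{jl}⁰ + Δt ∫₀¹ δ_t z_{jl}(σ) dσ, δ_x z_{jl}(τ) = Σ_{k=0}^{N−1} (D_x)_{jk} z_{kl}(τ), δ_y z_{jl}(τ) = Σ_{m=0}^{M̃−1} (D_y)_{lm} z_{jm}(τ), and assume M δ_t z_{jl}(τ) + K δ_x z_{jl}(τ) + L δ_y z_{jl}(τ) = ∇_z S(z_{jl}(τ), x_j, y_l) for all τ ∈ [0,1] and all j, l. Then for every j and l, (E_{jl}¹ − E_{jl}⁰)/Δt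 + Σ_{k=0}^{N−1} (D_x)_{jk} F̄_{jk,l} + Σ_{m=0}^{M̃−1} (D_y)_{lm} Ḡ_{j,lm} = 0, where E_{jl}^α = S(z_{jl}^α, x_j, y_l) − (1/2) (z_{jl}^α)ᵀ K δ_x z_{jl}^α − (1/2) (z_{jl}^α)ᵀ L δ_y z_{jl}^α for α ∈ {0,1}, F̄_{jk,l} = (1/2) Σ_{i=1}^s b_i (⟨z_{jl}⟩_iᵀ K ⟨δ_t z_{kl}⟩_i + ⟨z_{kl}⟩_iᵀ K ⟨δ_t z_{jl}⟩_i), and Ḡ_{j,lm} = (1/2) Σ_{i=1}^s b_i (⟨z_{jl}⟩_iᵀ L ⟨δ_t z_{jm}⟩_i + ⟨z_{jm}⟩_iᵀ L ⟨δ_t z_{jl}⟩_i). -/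

import Mathlib

open scoped Matrix

noncomputable def dotCLM {d : ℕ} (g : Fin d → ℝ) : (Fin d → ℝ) →L[ℝ] ℝ :=
  ∑ i : Fin d, g i • (ContinuousLinearMap.proj i : (Fin d → ℝ) →L[ℝ] ℝ)

noncomputable def lag {s : ℕ} (c : Fin s → ℝ) (i : Fin s) (τ : ℝ) : ℝ :=
  (Lagrange.basis (Finset.univ : Finset (Fin s)) c i).eval τ

noncomputable def bw {s : ℕ} (c : Fin s → ℝ) (i : Fin s) : ℝ :=
  ∫ τ in (0:ℝ)..1, lag c i τ

noncomputable def Acrk {s : ℕ} (c : Fin s → ℝ) (τ σ : ℝ) : ℝ :=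
  ∑ i : Fin s, (1 / bw c i) * (∫ α in (0:ℝ)..τ, lag c i α) * lag c i σ

noncomputable def wavg {s : ℕ} (c : Fin s → ℝ) (i : Fin s) {G : Type*}
    [NormedAddCommGroup G] [NormedSpace ℝ G] (f : ℝ → G) : G :=
  (1 / bw c i) • ∫ τ in (0:ℝ)..1, lag c i τ • f τ

/-! The stage polynomial `z_{jl}(τ)` has derivative `Δt Σ_i l_i(τ) ⟨δ_t z_{jl}⟩_i`, and since
`⟨f⟩_i` is the `l_i`-weighted mean of `f`, `∫₀¹ (Σ_i l_i a_i) · f = Σ_i b_i a_i · ⟨f⟩_i` for every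
continuous `f`. By the fundamental theorem of calculus the increment of any `C¹` quantity along
`z_{jl}` is therefore a `b`-weighted sum of stage averages. For `S` the averaged collocation
equation gives `⟨∇S(z)⟩_i = M⟨δ_t z⟩_i + K⟨δ_x z⟩_i + L⟨δ_y z⟩_i`, whose `M`-term pairs to zero
with `⟨δ_t z⟩_i`; the `K`- and `L`-terms cancel, by skew-symmetry again, against half the
increments of the quadratic parts of `E` and the fluxes `F̄`, `Ḡ`. -/

open MeasureTheory Set

section Collocation

variable {s : ℕ} (c : Fin s → ℝ) {E : Type*} [NormedAddCommGroup E] [NormedSpace ℝ E]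

noncomputable def lagInterp (a : Fin s → E) (τ : ℝ) : E := ∑ i, lag c i τ • a i

theorem continuous_lag (i : Fin s) : Continuous (lag c i) := Polynomial.continuous _

theorem continuous_lagInterp (a : Fin s → E) : Continuous (lagInterp c a) :=
  continuous_finsetSum _ fun i _ => (continuous_lag c i).smul continuous_const

theorem sum_lag_eq_one (hs : 0 < s) (hc : Function.Injective c) (τ : ℝ) : ∑ i, lag c i τ = 1 := by
  have : Nonempty (Fin s) := ⟨⟨0, hs⟩⟩
  simp only [lag, ← Polynomial.eval_finsetSum,
    Lagrange.sum_basis hc.injOn Finset.univ_nonempty, Polynomial.eval_one]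

theorem Acrk_zero (σ : ℝ) : Acrk c 0 σ = 0 := by simp [Acrk]

theorem Acrk_one (hs : 0 < s) (hc : Function.Injective c) (hb : ∀ i, bw c i ≠ 0) (σ : ℝ) :
    Acrk c 1 σ = 1 := by
  refine (Finset.sum_congr rfl fun i _ => ?_).trans (sum_lag_eq_one c hs hc σ)
  rw [show ∫ α in (0:ℝ)..1, lag c i α = bw c i from rfl, one_div_mul_cancel (hb i), one_mul]

theorem intervalIntegrable_lag_smul {f : ℝ → E} (hf : ContinuousOn f (Icc 0 1)) (i : Fin s) :
    IntervalIntegrable (fun τ => lag c i τ • f τ) volume 0 1 :=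
  ((continuous_lag c i).continuousOn.smul hf).intervalIntegrable_of_Icc zero_le_one

theorem integral_lag_smul {i : Fin s} (hb : bw c i ≠ 0) (f : ℝ → E) :
    ∫ τ in (0:ℝ)..1, lag c i τ • f τ = bw c i • wavg c i f := by
  rw [wavg, smul_smul, mul_one_div_cancel hb, one_smul]

theorem wavg_congr {f g : ℝ → E} (h : EqOn f g (Icc 0 1)) (i : Fin s) :
    wavg c i f = wavg c i g := by
  rw [wavg, wavg, intervalIntegral.integral_congr fun τ hτ => ?_]
  rw [uIcc_of_le zero_le_one] at hτ
  simp only [h hτ]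

theorem wavg_add {f g : ℝ → E} (hf : ContinuousOn f (Icc 0 1)) (hg : ContinuousOn g (Icc 0 1))
    (i : Fin s) : wavg c i (fun τ => f τ + g τ) = wavg c i f + wavg c i g := by
  simp only [wavg, smul_add,
    intervalIntegral.integral_add (intervalIntegrable_lag_smul c hf i)
      (intervalIntegrable_lag_smul c hg i)]

theorem wavg_sum_smul {ι : Type*} [Fintype ι] (r : ι → ℝ) {f : ι → ℝ → E}
    (hf : ∀ k, ContinuousOn (f k) (Icc 0 1)) (i : Fin s) :
    wavg c i (fun τ => ∑ k, r k • f k τ) = ∑ k, r k • wavg c i (f k) := by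
  simp only [wavg, Finset.smul_sum, smul_comm (lag c i _) (r _)]
  rw [intervalIntegral.integral_finsetSum (f := fun k τ => r k • lag c i τ • f k τ)
    fun k _ => (intervalIntegrable_lag_smul c (hf k) i).smul (r k)]
  simp only [intervalIntegral.integral_smul, Finset.smul_sum, smul_comm (1 / bw c i)]

theorem ContinuousLinearMap.map_wavg [CompleteSpace E] {F : Type*} [NormedAddCommGroup F]
    [NormedSpace ℝ F] [CompleteSpace F] (φ : E →L[ℝ] F) {f : ℝ → E}
    (hf : ContinuousOn f (Icc 0 1)) (i : Fin s) :
    φ (wavg c i f) = wavg c i (fun τ => φ (f τ)) := by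
  simp only [wavg, map_smul, ← φ.intervalIntegral_comp_comm (intervalIntegrable_lag_smul c hf i)]

theorem integral_Acrk_smul {g : ℝ → E} (hg : ContinuousOn g (Icc 0 1)) (τ : ℝ) :
    ∫ σ in (0:ℝ)..1, Acrk c τ σ • g σ = ∑ i, (∫ α in (0:ℝ)..τ, lag c i α) • wavg c i g := by
  simp only [Acrk, Finset.sum_smul, mul_smul]
  rw [intervalIntegral.integral_finsetSum
    (f := fun i σ => (1 / bw c i) • (∫ α in (0:ℝ)..τ, lag c i α) • lag c i σ • g σ)
    fun i _ => ((intervalIntegrable_lag_smul c hg i).smul _).smul _]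
  simp only [intervalIntegral.integral_smul, wavg]
  exact Finset.sum_congr rfl fun i _ => smul_comm _ _ _

theorem hasDerivAt_integral_Acrk_smul [CompleteSpace E] {g : ℝ → E}
    (hg : ContinuousOn g (Icc 0 1)) (τ : ℝ) :
    HasDerivAt (fun τ => ∫ σ in (0:ℝ)..1, Acrk c τ σ • g σ)
      (lagInterp c (fun i => wavg c i g) τ) τ := by
  simp only [integral_Acrk_smul c hg]
  exact HasDerivAt.fun_sum fun i _ =>
    (((continuous_lag c i).integral_hasStrictDerivAt 0 τ).hasDerivAt).smul_const _

end Collocation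

section Energy

variable {s d : ℕ} (c : Fin s → ℝ)

theorem dotCLM_apply (g v : Fin d → ℝ) : dotCLM g v = g ⬝ᵥ v := by
  simp [dotCLM, dotProduct]

theorem ContinuousOn.dotProduct {X n : Type*} [TopologicalSpace X] [Fintype n] {f g : X → n → ℝ}
    {t : Set X} (hf : ContinuousOn f t) (hg : ContinuousOn g t) :
    ContinuousOn (fun x => f x ⬝ᵥ g x) t :=
  (continuous_fst.dotProduct continuous_snd).comp_continuousOn (hf.prodMk hg)

theorem ContinuousOn.matrix_mulVec {X m n : Type*} [TopologicalSpace X] [Fintype n]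
    (A : Matrix m n ℝ) {f : X → n → ℝ} {t : Set X} (hf : ContinuousOn f t) :
    ContinuousOn (fun x => A *ᵥ f x) t :=
  (continuous_const.matrix_mulVec continuous_id).comp_continuousOn hf

theorem Matrix.dotProduct_mulVec_eq_neg {n : Type*} [Fintype n] {K : Matrix n n ℝ} (hK : Kᵀ = -K)
    (x y : n → ℝ) : x ⬝ᵥ K *ᵥ y = -(y ⬝ᵥ K *ᵥ x) := by
  rw [← Matrix.dotProduct_transpose_mulVec, hK, Matrix.neg_mulVec, dotProduct_neg]

theorem Matrix.dotProduct_mulVec_self_eq_zero {n : Type*} [Fintype n] {K : Matrix n n ℝ}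
    (hK : Kᵀ = -K) (x : n → ℝ) : x ⬝ᵥ K *ᵥ x = 0 := by
  linarith [Matrix.dotProduct_mulVec_eq_neg hK x x]

theorem Matrix.mulVec_wavg (A : Matrix (Fin d) (Fin d) ℝ) {f : ℝ → Fin d → ℝ}
    (hf : ContinuousOn f (Icc 0 1)) (i : Fin s) :
    A *ᵥ wavg c i f = wavg c i (fun τ => A *ᵥ f τ) :=
  (Matrix.mulVecLin A).toContinuousLinearMap.map_wavg c hf i

theorem integral_lagInterp_dotProduct (hb : ∀ i, bw c i ≠ 0) (a : Fin s → Fin d → ℝ)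
    {f : ℝ → Fin d → ℝ} (hf : ContinuousOn f (Icc 0 1)) :
    ∫ τ in (0:ℝ)..1, lagInterp c a τ ⬝ᵥ f τ = ∑ i, bw c i * (a i ⬝ᵥ wavg c i f) := by
  have hsplit : ∀ τ, lagInterp c a τ ⬝ᵥ f τ = ∑ i, dotCLM (a i) (lag c i τ • f τ) := fun τ => by
    simp only [lagInterp, sum_dotProduct, smul_dotProduct, dotCLM_apply, dotProduct_smul]
  simp only [hsplit]
  rw [intervalIntegral.integral_finsetSum (f := fun i τ => dotCLM (a i) (lag c i τ • f τ))
    fun i _ =>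
    ((dotCLM (a i)).continuous.comp_continuousOn
      ((continuous_lag c i).continuousOn.smul hf)).intervalIntegrable_of_Icc zero_le_one]
  refine Finset.sum_congr rfl fun i _ => ?_
  rw [(dotCLM (a i)).intervalIntegral_comp_comm (intervalIntegrable_lag_smul c hf i),
    integral_lag_smul c (hb i), map_smul, dotCLM_apply, smul_eq_mul]

variable {Δt : ℝ}

theorem sub_eq_sum_bw_mul_dotProduct_wavg (hb : ∀ i, bw c i ≠ 0) {V : (Fin d → ℝ) → ℝ}
    {G : (Fin d → ℝ) → Fin d → ℝ} (hV : ∀ w, HasFDerivAt V (dotCLM (G w)) w)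
    {u : ℝ → Fin d → ℝ} {a : Fin s → Fin d → ℝ} (hu : ∀ τ, HasDerivAt u (Δt • lagInterp c a τ) τ)
    (hG : ContinuousOn (fun τ => G (u τ)) (Icc 0 1)) :
    V (u 1) - V (u 0) = Δt * ∑ i, bw c i * (a i ⬝ᵥ wavg c i (fun τ => G (u τ))) := by
  have hderiv : ∀ τ, HasDerivAt (fun τ => V (u τ)) (Δt * (lagInterp c a τ ⬝ᵥ G (u τ))) τ := by
    intro τ
    have h := (hV (u τ)).comp_hasDerivAt τ (hu τ)
    rwa [dotCLM_apply, dotProduct_smul, smul_eq_mul, dotProduct_comm] at h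
  have hint : IntervalIntegrable (fun τ => Δt * (lagInterp c a τ ⬝ᵥ G (u τ))) volume 0 1 :=
    (continuousOn_const.mul ((continuous_lagInterp c a).continuousOn.dotProduct hG))
      |>.intervalIntegrable_of_Icc zero_le_one
  rw [← intervalIntegral.integral_eq_sub_of_hasDerivAt (fun τ _ => hderiv τ) hint,
    intervalIntegral.integral_const_mul, integral_lagInterp_dotProduct c hb a hG]

theorem sub_eq_of_collocation (hb : ∀ i, bw c i ≠ 0) {M K L : Matrix (Fin d) (Fin d) ℝ}
    (hM : Mᵀ = -M) {V : (Fin d → ℝ) → ℝ} {G : (Fin d → ℝ) → Fin d → ℝ}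
    (hV : ∀ w, HasFDerivAt V (dotCLM (G w)) w) {g f₁ f₂ u : ℝ → Fin d → ℝ}
    (hg : ContinuousOn g (Icc 0 1)) (hf₁ : ContinuousOn f₁ (Icc 0 1))
    (hf₂ : ContinuousOn f₂ (Icc 0 1))
    (hu : ∀ τ, HasDerivAt u (Δt • lagInterp c (fun i => wavg c i g) τ) τ)
    (hcoll : ∀ τ ∈ Icc (0:ℝ) 1, M *ᵥ g τ + K *ᵥ f₁ τ + L *ᵥ f₂ τ = G (u τ)) :
    V (u 1) - V (u 0) = Δt * ∑ i, bw c i * (wavg c i g ⬝ᵥ K *ᵥ wavg c i f₁)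
      + Δt * ∑ i, bw c i * (wavg c i g ⬝ᵥ L *ᵥ wavg c i f₂) := by
  have hMg := hg.matrix_mulVec M
  have hKf := hf₁.matrix_mulVec K
  have hrhs : ContinuousOn (fun τ => M *ᵥ g τ + K *ᵥ f₁ τ + L *ᵥ f₂ τ) (Icc 0 1) :=
    (hMg.add hKf).add (hf₂.matrix_mulVec L)
  have hwavg : ∀ i, wavg c i (fun τ => G (u τ))
      = M *ᵥ wavg c i g + K *ᵥ wavg c i f₁ + L *ᵥ wavg c i f₂ := fun i => by
    rw [← wavg_congr c hcoll,
      wavg_add c (f := fun τ => M *ᵥ g τ + K *ᵥ f₁ τ) (hMg.add hKf) (hf₂.matrix_mulVec L),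
      wavg_add c hMg hKf, M.mulVec_wavg c hg, K.mulVec_wavg c hf₁, L.mulVec_wavg c hf₂]
  rw [sub_eq_sum_bw_mul_dotProduct_wavg c hb hV hu (hrhs.congr fun τ hτ => (hcoll τ hτ).symm),
    ← mul_add, ← Finset.sum_add_distrib]
  simp only [hwavg, dotProduct_add, Matrix.dotProduct_mulVec_self_eq_zero hM, zero_add, mul_add]

theorem dotProduct_mulVec_sub_eq (hb : ∀ i, bw c i ≠ 0) (K : Matrix (Fin d) (Fin d) ℝ)
    {u v : ℝ → Fin d → ℝ} {a b : Fin s → Fin d → ℝ}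
    (hu : ∀ τ, HasDerivAt u (Δt • lagInterp c a τ) τ)
    (hv : ∀ τ, HasDerivAt v (Δt • lagInterp c b τ) τ) :
    u 1 ⬝ᵥ K *ᵥ v 1 - u 0 ⬝ᵥ K *ᵥ v 0
      = Δt * ∑ i, bw c i * (a i ⬝ᵥ K *ᵥ wavg c i v + wavg c i u ⬝ᵥ K *ᵥ b i) := by
  have hu' : ContinuousOn u (Icc 0 1) :=
    (Differentiable.continuous fun τ => (hu τ).differentiableAt).continuousOn
  have hv' : ContinuousOn v (Icc 0 1) :=
    (Differentiable.continuous fun τ => (hv τ).differentiableAt).continuousOn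
  have hderiv : ∀ τ, HasDerivAt (fun τ => u τ ⬝ᵥ K *ᵥ v τ)
      (Δt * (lagInterp c a τ ⬝ᵥ K *ᵥ v τ + lagInterp c b τ ⬝ᵥ Kᵀ *ᵥ u τ)) τ := by
    intro τ
    have h := (Matrix.toBilin' K).toContinuousBilinearMap.hasDerivAt_of_bilinear
      (fun _ => hu τ) (fun _ => hv τ)
    simp only [LinearMap.toContinuousBilinearMap_apply, Matrix.toBilin'_apply'] at h
    refine h.congr_deriv ?_
    rw [Matrix.dotProduct_transpose_mulVec, Matrix.mulVec_smul, dotProduct_smul, smul_dotProduct,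
      smul_eq_mul, smul_eq_mul]
    ring
  have hint₁ : IntervalIntegrable (fun τ => lagInterp c a τ ⬝ᵥ K *ᵥ v τ) volume 0 1 :=
    ((continuous_lagInterp c a).continuousOn.dotProduct (hv'.matrix_mulVec K))
      |>.intervalIntegrable_of_Icc zero_le_one
  have hint₂ : IntervalIntegrable (fun τ => lagInterp c b τ ⬝ᵥ Kᵀ *ᵥ u τ) volume 0 1 :=
    ((continuous_lagInterp c b).continuousOn.dotProduct (hu'.matrix_mulVec Kᵀ))
      |>.intervalIntegrable_of_Icc zero_le_one
  rw [← intervalIntegral.integral_eq_sub_of_hasDerivAt (fun τ _ => hderiv τ)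
      ((hint₁.add hint₂).const_mul Δt),
    intervalIntegral.integral_const_mul, intervalIntegral.integral_add hint₁ hint₂,
    integral_lagInterp_dotProduct c hb a (hv'.matrix_mulVec K),
    integral_lagInterp_dotProduct c hb b (hu'.matrix_mulVec Kᵀ), ← Finset.sum_add_distrib]
  refine congrArg _ (Finset.sum_congr rfl fun i _ => ?_)
  rw [← K.mulVec_wavg c hv', ← Kᵀ.mulVec_wavg c hu', Matrix.dotProduct_transpose_mulVec, mul_add]

theorem dotProduct_mulVec_sum_sub_eq (hb : ∀ i, bw c i ≠ 0) {K : Matrix (Fin d) (Fin d) ℝ}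
    (hK : Kᵀ = -K) {ι : Type*} [Fintype ι] (D : ι → ℝ) {u : ℝ → Fin d → ℝ}
    {v : ι → ℝ → Fin d → ℝ} {a : Fin s → Fin d → ℝ} {b : ι → Fin s → Fin d → ℝ}
    (hu : ∀ τ, HasDerivAt u (Δt • lagInterp c a τ) τ)
    (hv : ∀ k τ, HasDerivAt (v k) (Δt • lagInterp c (b k) τ) τ) :
    u 1 ⬝ᵥ K *ᵥ (∑ k, D k • v k 1) - u 0 ⬝ᵥ K *ᵥ (∑ k, D k • v k 0)
      = 2 * (Δt * ∑ i, bw c i * (a i ⬝ᵥ K *ᵥ wavg c i (fun τ => ∑ k, D k • v k τ)))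
        + 2 * (Δt * ∑ k, D k * ((1/2) * ∑ i, bw c i *
            (wavg c i u ⬝ᵥ K *ᵥ b k i + wavg c i (v k) ⬝ᵥ K *ᵥ a i))) := by
  have hv' : ∀ k, ContinuousOn (v k) (Icc 0 1) := fun k =>
    (Differentiable.continuous fun τ => (hv k τ).differentiableAt).continuousOn
  simp only [Matrix.mulVec_sum, Matrix.mulVec_smul, dotProduct_sum, dotProduct_smul, smul_eq_mul,
    ← Finset.sum_sub_distrib, ← mul_sub, dotProduct_mulVec_sub_eq c hb K hu (hv _),
    wavg_sum_smul c D hv', Matrix.dotProduct_mulVec_eq_neg hK (wavg c _ (v _))]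
  simp only [Finset.mul_sum]
  rw [Finset.sum_comm (γ := Fin s), ← Finset.sum_add_distrib]
  refine Finset.sum_congr rfl fun k _ => ?_
  rw [← Finset.sum_add_distrib]
  refine Finset.sum_congr rfl fun i _ => ?_
  ring

end Energy

theorem stmt8_general {s d N Mt : ℕ} (hs : 1 ≤ s) (c : Fin s → ℝ) (hc : Function.Injective c)
    (hb : ∀ i, bw c i ≠ 0)
    (M K L : Matrix (Fin d) (Fin d) ℝ) (hM : Mᵀ = -M) (hK : Kᵀ = -K) (hL : Lᵀ = -L)
    (S : (Fin d → ℝ) → ℝ → ℝ → ℝ) (gradS : (Fin d → ℝ) → ℝ → ℝ → (Fin d → ℝ))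
    (hS : ∀ (x y : ℝ) (w : Fin d → ℝ), HasFDerivAt (fun w' => S w' x y) (dotCLM (gradS w x y)) w)
    (Dx : Matrix (Fin N) (Fin N) ℝ)
    (Dy : Matrix (Fin Mt) (Fin Mt) ℝ)
    (x : Fin N → ℝ) (y : Fin Mt → ℝ) (Δt : ℝ) (hΔt : 0 < Δt)
    (δtz : Fin N → Fin Mt → ℝ → (Fin d → ℝ))
    (hδtc : ∀ j l, ContinuousOn (δtz j l) (Set.Icc 0 1))
    (z0 : Fin N → Fin Mt → Fin d → ℝ) (z : Fin N → Fin Mt → ℝ → (Fin d → ℝ))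
    (hz : ∀ j l τ, z j l τ = z0 j l + Δt • ∫ σ in (0:ℝ)..1, Acrk c τ σ • δtz j l σ)
    (z1 : Fin N → Fin Mt → Fin d → ℝ)
    (hz1 : ∀ j l, z1 j l = z0 j l + Δt • ∫ σ in (0:ℝ)..1, δtz j l σ)
    (δxz δyz : Fin N → Fin Mt → ℝ → (Fin d → ℝ))
    (hδx : ∀ j l τ, δxz j l τ = ∑ k, Dx j k • z k l τ)
    (hδy : ∀ j l τ, δyz j l τ = ∑ m, Dy l m • z j m τ)
    (hcoll : ∀ j l, ∀ τ ∈ Set.Icc (0:ℝ) 1,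
      M.mulVec (δtz j l τ) + K.mulVec (δxz j l τ) + L.mulVec (δyz j l τ)
        = gradS (z j l τ) (x j) (y l))
    (E0 E1 : Fin N → Fin Mt → ℝ)
    (hE0 : ∀ j l, E0 j l = S (z j l 0) (x j) (y l)
        - (1/2) * dotProduct (z j l 0) (K.mulVec (∑ k, Dx j k • z k l 0))
        - (1/2) * dotProduct (z j l 0) (L.mulVec (∑ m, Dy l m • z j m 0)))
    (hE1 : ∀ j l, E1 j l = S (z1 j l) (x j) (y l)
        - (1/2) * dotProduct (z1 j l) (K.mulVec (∑ k, Dx j k • z1 k l))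
        - (1/2) * dotProduct (z1 j l) (L.mulVec (∑ m, Dy l m • z1 j m)))
    (Fb : Fin N → Fin N → Fin Mt → ℝ) (Gb : Fin N → Fin Mt → Fin Mt → ℝ)
    (hFb : ∀ j k l, Fb j k l = (1/2) * ∑ i, bw c i *
        (dotProduct (wavg c i (z j l)) (K.mulVec (wavg c i (δtz k l)))
          + dotProduct (wavg c i (z k l)) (K.mulVec (wavg c i (δtz j l)))))
    (hGb : ∀ j l m, Gb j l m = (1/2) * ∑ i, bw c i *
        (dotProduct (wavg c i (z j l)) (L.mulVec (wavg c i (δtz j m)))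
          + dotProduct (wavg c i (z j m)) (L.mulVec (wavg c i (δtz j l))))) :
    ∀ j l, (E1 j l - E0 j l) / Δt + (∑ k, Dx j k * Fb j k l) + (∑ m, Dy l m * Gb j l m) = 0 := by
  intro j l
  have hderiv : ∀ k m τ, HasDerivAt (z k m) (Δt • lagInterp c (fun i => wavg c i (δtz k m)) τ) τ :=
    fun k m τ => by
      rw [show z k m = _ from funext (hz k m)]
      exact ((hasDerivAt_integral_Acrk_smul c (hδtc k m) τ).const_smul Δt).const_add _
  have hcont : ∀ k m, ContinuousOn (z k m) (Icc 0 1) := fun k m =>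
    (Differentiable.continuous fun τ => (hderiv k m τ).differentiableAt).continuousOn
  have hz_zero : ∀ k m, z k m 0 = z0 k m := fun k m => by simp [hz, Acrk_zero]
  have hz_one : ∀ k m, z k m 1 = z1 k m := fun k m => by simp [hz, hz1, Acrk_one c hs hc hb]
  have henergy := sub_eq_of_collocation c hb hM (hS (x j) (y l)) (hδtc j l)
    (f₁ := fun τ => ∑ k, Dx j k • z k l τ) (f₂ := fun τ => ∑ m, Dy l m • z j m τ)
    (continuousOn_finsetSum _ fun k _ => (hcont k l).const_smul (Dx j k))
    (continuousOn_finsetSum _ fun m _ => (hcont j m).const_smul (Dy l m)) (hderiv j l)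
    fun τ hτ => by simpa only [hδx, hδy] using hcoll j l τ hτ
  have hfluxK := dotProduct_mulVec_sum_sub_eq c hb hK (Dx j) (v := fun k => z k l) (hderiv j l)
    fun k => hderiv k l
  have hfluxL := dotProduct_mulVec_sum_sub_eq c hb hL (Dy l) (v := fun m => z j m) (hderiv j l)
    fun m => hderiv j m
  simp only [hz_zero, hz_one] at henergy hfluxK hfluxL
  have hbalance : E1 j l - E0 j l
      = -(Δt * ((∑ k, Dx j k * Fb j k l) + ∑ m, Dy l m * Gb j l m)) := by
    simp only [hE0, hE1, hFb, hGb, hz_zero]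
    linear_combination henergy - hfluxK / 2 - hfluxL / 2
  rw [hbalance, neg_div, mul_div_cancel_left₀ _ hΔt.ne']
  ring

theorem stmt8 {s d N Mt : ℕ} (hs : 1 ≤ s) (c : Fin s → ℝ) (hc : Function.Injective c)
    (hb : ∀ i, bw c i ≠ 0)
    (M K L : Matrix (Fin d) (Fin d) ℝ) (hM : Mᵀ = -M) (hK : Kᵀ = -K) (hL : Lᵀ = -L)
    (S : (Fin d → ℝ) → ℝ → ℝ → ℝ) (gradS : (Fin d → ℝ) → ℝ → ℝ → (Fin d → ℝ))
    (hS : ∀ (x y : ℝ) (w : Fin d → ℝ), HasFDerivAt (fun w' => S w' x y) (dotCLM (gradS w x y)) w)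
    (hSc : ∀ x y : ℝ, Continuous fun w => gradS w x y)
    (Dx : Matrix (Fin N) (Fin N) ℝ) (hDx : Dxᵀ = -Dx)
    (Dy : Matrix (Fin Mt) (Fin Mt) ℝ) (hDy : Dyᵀ = -Dy)
    (x : Fin N → ℝ) (y : Fin Mt → ℝ) (Δt : ℝ) (hΔt : 0 < Δt)
    (δtz : Fin N → Fin Mt → ℝ → (Fin d → ℝ))
    (hδtc : ∀ j l, ContinuousOn (δtz j l) (Set.Icc 0 1))
    (z0 : Fin N → Fin Mt → Fin d → ℝ) (z : Fin N → Fin Mt → ℝ → (Fin d → ℝ))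
    (hz : ∀ j l τ, z j l τ = z0 j l + Δt • ∫ σ in (0:ℝ)..1, Acrk c τ σ • δtz j l σ)
    (z1 : Fin N → Fin Mt → Fin d → ℝ)
    (hz1 : ∀ j l, z1 j l = z0 j l + Δt • ∫ σ in (0:ℝ)..1, δtz j l σ)
    (δxz δyz : Fin N → Fin Mt → ℝ → (Fin d → ℝ))
    (hδx : ∀ j l τ, δxz j l τ = ∑ k, Dx j k • z k l τ)
    (hδy : ∀ j l τ, δyz j l τ = ∑ m, Dy l m • z j m τ)
    (hcoll : ∀ j l, ∀ τ ∈ Set.Icc (0:ℝ) 1,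
      M.mulVec (δtz j l τ) + K.mulVec (δxz j l τ) + L.mulVec (δyz j l τ)
        = gradS (z j l τ) (x j) (y l))
    (E0 E1 : Fin N → Fin Mt → ℝ)
    (hE0 : ∀ j l, E0 j l = S (z j l 0) (x j) (y l)
        - (1/2) * dotProduct (z j l 0) (K.mulVec (∑ k, Dx j k • z k l 0))
        - (1/2) * dotProduct (z j l 0) (L.mulVec (∑ m, Dy l m • z j m 0)))
    (hE1 : ∀ j l, E1 j l = S (z1 j l) (x j) (y l)
        - (1/2) * dotProduct (z1 j l) (K.mulVec (∑ k, Dx j k • z1 k l))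
        - (1/2) * dotProduct (z1 j l) (L.mulVec (∑ m, Dy l m • z1 j m)))
    (Fb : Fin N → Fin N → Fin Mt → ℝ) (Gb : Fin N → Fin Mt → Fin Mt → ℝ)
    (hFb : ∀ j k l, Fb j k l = (1/2) * ∑ i, bw c i *
        (dotProduct (wavg c i (z j l)) (K.mulVec (wavg c i (δtz k l)))
          + dotProduct (wavg c i (z k l)) (K.mulVec (wavg c i (δtz j l)))))
    (hGb : ∀ j l m, Gb j l m = (1/2) * ∑ i, bw c i *
        (dotProduct (wavg c i (z j l)) (L.mulVec (wavg c i (δtz j m)))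
          + dotProduct (wavg c i (z j m)) (L.mulVec (wavg c i (δtz j l))))) :
    ∀ j l, (E1 j l - E0 j l) / Δt + (∑ k, Dx j k * Fb j k l) + (∑ m, Dy l m * Gb j l m) = 0 :=
  stmt8_general hs c hc hb M K L hM hK hL S gradS hS Dx Dy x y Δt hΔt δtz hδtc z0 z hz z1 hz1 δxz
    δyz hδx hδy hcoll E0 E1 hE0 hE1 Fb Gb hFb hGb
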